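/- arXiv:0804.1587 — 4 statements merged into one kernel-verified Lean document; each statement's English description precedes it below -/
import Mathlib

section
/- If T is a semistandard Young tableau of shape λ and m_i(w_T) > 0, then the filling ẽ_i(T) obtained by changing the entry i at the rightmost maximizing position of the reading word to i−1 is again a semistandard Young tableau of shape λ. -/
/-
The entry at the rightmost position `p` maximising `m_i(w, ·)` is an `i`, since every segment
of `w` starting at `p` contains more `i`s than `i - 1`s, while no segment ending just before `p`
does. Lowering it to `i - 1` keeps its row weakly increasing, because its left neighbour is not
an `i`. It also keeps its column strict: if the entry below it were `i - 1`, then the run of `i`s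
starting at `p` would sit on a run of as many `i - 1`s, and the segment of `w` from `p` to the end
of that run would contain at least as many `i - 1`s as `i`s.
-/

/-- A semistandard Young tableau (French convention), listed as rows from top
to bottom: positive entries, rows weakly increasing, row lengths weakly
increasing downwards, and entries strictly increasing up columns. -/
def IsSSYT (rows : List (List ℕ)) : Prop :=
  (∀ r ∈ rows, ∀ x ∈ r, 1 ≤ x) ∧
  (∀ r ∈ rows, r.Chain' (· ≤ ·)) ∧
  rows.Chain' (fun upper lower =>
    upper.length ≤ lower.length ∧
    ∀ c < upper.length, lower.getD c 0 < upper.getD c 0)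

/-- The reading word: rows read from top to bottom, left to right. -/
def readingWord (rows : List (List ℕ)) : List ℕ := rows.flatten

def mi (i : ℕ) (w : List ℕ) (r : ℕ) : ℤ :=
  ((w.drop r).count i : ℤ) - ((w.drop r).count (i - 1) : ℤ)

noncomputable def miMax (i : ℕ) (w : List ℕ) : ℤ :=
  sSup {m : ℤ | ∃ r < w.length, mi i w r = m}

noncomputable def rightPos (i : ℕ) (w : List ℕ) : ℕ :=
  sSup {r : ℕ | r < w.length ∧ mi i w r = miMax i w}

noncomputable def etildeW (i : ℕ) (w : List ℕ) : List ℕ :=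
  w.set (rightPos i w) (i - 1)

/-- Change the p-th entry (in reading-word order) of a tableau to v. -/
def setEntry : List (List ℕ) → ℕ → ℕ → List (List ℕ)
  | [], _, _ => []
  | r :: rs, p, v =>
      if p < r.length then r.set p v :: rs else r :: setEntry rs (p - r.length) v

def letterBalance (i : ℕ) (l : List ℕ) : ℤ :=
  (l.count i : ℤ) - (l.count (i - 1) : ℤ)

section SignatureRule

variable {i : ℕ}

theorem letterBalance_append (l₁ l₂ : List ℕ) :
    letterBalance i (l₁ ++ l₂) = letterBalance i l₁ + letterBalance i l₂ := by
  simp only [letterBalance, List.count_append]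
  push_cast
  ring

theorem mi_append_length (u v : List ℕ) : mi i (u ++ v) u.length = letterBalance i v := by
  rw [mi, List.drop_left, letterBalance]

theorem bddAbove_mi (w : List ℕ) : BddAbove {m : ℤ | ∃ r < w.length, mi i w r = m} :=
  ((Set.finite_Iio w.length).image (mi i w)).bddAbove

theorem mi_le_miMax {w : List ℕ} {r : ℕ} (hr : r < w.length) : mi i w r ≤ miMax i w :=
  le_csSup (bddAbove_mi w) ⟨r, hr, rfl⟩

theorem rightPos_spec {w : List ℕ} (hpos : 0 < miMax i w) :
    rightPos i w < w.length ∧ mi i w (rightPos i w) = miMax i w ∧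
      ∀ r < w.length, mi i w r = miMax i w → r ≤ rightPos i w := by
  have hne : {m : ℤ | ∃ r < w.length, mi i w r = m}.Nonempty := by
    by_contra h
    rw [Set.not_nonempty_iff_eq_empty] at h
    rw [miMax, h, Int.csSup_empty] at hpos
    exact hpos.false
  obtain ⟨r, hr, hmax⟩ := hne.csSup_mem ((Set.finite_Iio w.length).image (mi i w))
  have hbdd : BddAbove {r : ℕ | r < w.length ∧ mi i w r = miMax i w} :=
    ⟨w.length, fun r hr => hr.1.le⟩
  have hne' : {r : ℕ | r < w.length ∧ mi i w r = miMax i w}.Nonempty := ⟨r, hr, hmax⟩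
  obtain ⟨hlt, heq⟩ := Nat.sSup_mem hne' hbdd
  exact ⟨hlt, heq, fun r hr hmax => le_csSup hbdd ⟨hr, hmax⟩⟩

theorem count_le_count_pred_of_rightPos_eq {u s v : List ℕ} (hpos : 0 < miMax i (u ++ s ++ v))
    (hp : rightPos i (u ++ s ++ v) = (u ++ s).length) : s.count i ≤ s.count (i - 1) := by
  obtain ⟨hlt, hmax, -⟩ := rightPos_spec hpos
  have h := mi_le_miMax (i := i) (w := u ++ s ++ v) (r := u.length)
    (by rw [hp] at hlt; simp only [List.length_append] at hlt ⊢; omega)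
  rw [← hmax, hp, mi_append_length, List.append_assoc, mi_append_length,
    letterBalance_append] at h
  simp only [letterBalance] at h
  omega

theorem count_pred_lt_count_of_rightPos_eq {u s v : List ℕ} (hpos : 0 < miMax i (u ++ s ++ v))
    (hp : rightPos i (u ++ s ++ v) = u.length) (hs : s ≠ []) : s.count (i - 1) < s.count i := by
  obtain ⟨hlt, hmax, hright⟩ := rightPos_spec hpos
  by_contra! hbal
  have h : miMax i (u ++ s ++ v) ≤ mi i (u ++ s ++ v) (u ++ s).length := by
    rw [← hmax, hp, mi_append_length, List.append_assoc, mi_append_length,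
      letterBalance_append, letterBalance]
    linarith
  have hs_len := List.length_pos_iff.mpr hs
  rcases v.eq_nil_or_concat with rfl | ⟨v', z, rfl⟩
  · have h0 : letterBalance i [] = 0 := by simp [letterBalance]
    rw [mi_append_length, h0] at h
    exact h.not_gt hpos
  · have hr : (u ++ s).length < (u ++ s ++ v'.concat z).length := by simp
    have := hright _ hr (le_antisymm (mi_le_miMax hr) h)
    rw [hp, List.length_append] at this
    omega

theorem eq_of_rightPos_eq_length {u v : List ℕ} {x : ℕ} (hpos : 0 < miMax i (u ++ x :: v))
    (hp : rightPos i (u ++ x :: v) = u.length) : x = i := by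
  rw [← List.singleton_append, ← List.append_assoc] at hpos hp
  have := count_pred_lt_count_of_rightPos_eq hpos hp (List.cons_ne_nil x [])
  by_contra hx
  simp [List.count_singleton, hx] at this

theorem ne_of_rightPos_eq_length_add_one (hi : 1 ≤ i) {u v : List ℕ} {x : ℕ}
    (hpos : 0 < miMax i (u ++ x :: v)) (hp : rightPos i (u ++ x :: v) = u.length + 1) :
    x ≠ i := by
  rw [← List.singleton_append, ← List.append_assoc] at hpos hp
  have := count_le_count_pred_of_rightPos_eq hpos (by simpa using hp)
  rintro rfl
  simp only [List.count_singleton, beq_self_eq_true, if_true, beq_iff_eq] at this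
  split_ifs at this <;> omega

end SignatureRule

theorem List.exists_eq_append_cons_getD {α : Type*} {l : List α} {c : ℕ} (hc : c < l.length)
    (d : α) :
    ∃ s t, l = s ++ l.getD c d :: t ∧ s.length = c :=
  ⟨l.take c, l.drop (c + 1), by rw [List.getD_eq_getElem _ _ hc, ← List.drop_eq_getElem_cons,
    List.take_append_drop], by rw [List.length_take]; omega⟩

theorem List.getD_append_cons_of_ne {α : Type*} {a b : List α} {x : α} (y : α) {j : ℕ}
    (hj : j ≠ a.length) (d : α) : (a ++ x :: b).getD j d = (a ++ y :: b).getD j d := by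
  rcases Nat.lt_or_gt_of_ne hj with h | h
  · rw [List.getD_append _ _ _ _ h, List.getD_append _ _ _ _ h]
  · obtain ⟨k, rfl⟩ := Nat.exists_eq_add_of_lt h
    rw [List.getD_append_right _ _ _ _ h.le, List.getD_append_right _ _ _ _ h.le,
      show a.length + k + 1 - a.length = k + 1 by omega, List.getD_cons_succ,
      List.getD_cons_succ]

theorem List.Pairwise.append_cons_of_le {α : Type*} [Preorder α] {a b : List α} {x y : α}
    (h : (a ++ x :: b).Pairwise (· ≤ ·)) (hyx : y ≤ x) (ha : ∀ z ∈ a, z ≤ y) :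
    (a ++ y :: b).Pairwise (· ≤ ·) := by
  simp only [List.pairwise_append, List.pairwise_cons, List.mem_cons] at h ⊢
  obtain ⟨hpa, ⟨hxb, hpb⟩, -⟩ := h
  refine ⟨hpa, ⟨fun z hz => hyx.trans (hxb z hz), hpb⟩, ?_⟩
  rintro z hz w (rfl | hw)
  · exact ha z hz
  · exact (ha z hz).trans (hyx.trans (hxb w hw))

def ColumnStrict (upper lower : List ℕ) : Prop :=
  upper.length ≤ lower.length ∧ ∀ c < upper.length, lower.getD c 0 < upper.getD c 0

theorem isSSYT_iff (rows : List (List ℕ)) :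
    IsSSYT rows ↔ (∀ r ∈ rows, ∀ x ∈ r, 1 ≤ x) ∧ (∀ r ∈ rows, r.Pairwise (· ≤ ·)) ∧
      rows.IsChain ColumnStrict := by
  refine and_congr_right fun _ => and_congr (forall₂_congr fun r _ => ?_) Iff.rfl
  exact List.isChain_iff_pairwise

namespace ColumnStrict

theorem of_append {a u sa v : List ℕ} (h : ColumnStrict (a ++ u) (sa ++ v))
    (hlen : a.length = sa.length) : ColumnStrict u v := by
  refine ⟨by simpa [hlen] using h.1, fun c hc => ?_⟩
  have := h.2 (a.length + c) (by rw [List.length_append]; omega)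
  rwa [List.getD_append_right _ _ _ _ (by omega), List.getD_append_right _ _ _ _ (by omega),
    hlen, Nat.add_sub_cancel_left] at this

theorem replace_lower {U a b : List ℕ} {x y : ℕ} (h : ColumnStrict U (a ++ x :: b))
    (hyx : y ≤ x) : ColumnStrict U (a ++ y :: b) := by
  refine ⟨by simpa using h.1, fun c hc => ?_⟩
  have := h.2 c hc
  by_cases hca : c = a.length
  · subst hca
    simp only [List.getD_append_right _ _ _ _ le_rfl, Nat.sub_self, List.getD_cons_zero] at this ⊢
    omega
  · rwa [List.getD_append_cons_of_ne y hca] at this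

theorem replace_upper {L a b : List ℕ} {x y : ℕ} (h : ColumnStrict (a ++ x :: b) L)
    (hy : L.getD a.length 0 < y) : ColumnStrict (a ++ y :: b) L := by
  refine ⟨by simpa using h.1, fun c hc => ?_⟩
  by_cases hca : c = a.length
  · subst hca
    simpa only [List.getD_append_right _ _ _ _ le_rfl, Nat.sub_self, List.getD_cons_zero]
  · rw [List.getD_append_cons_of_ne x hca]
    exact h.2 c (by simpa using hc)

end ColumnStrict

theorem IsSSYT.replace {pre post : List (List ℕ)} {a b : List ℕ} {x y : ℕ}
    (hT : IsSSYT (pre ++ (a ++ x :: b) :: post)) (hy : 1 ≤ y) (hyx : y ≤ x)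
    (hleft : ∀ z ∈ a, z ≤ y) (hbelow : ∀ S ∈ post.head?, S.getD a.length 0 < y) :
    IsSSYT (pre ++ (a ++ y :: b) :: post) := by
  rw [isSSYT_iff] at hT ⊢
  obtain ⟨hpos, hrow, hcol⟩ := hT
  have hrows : ∀ r ∈ pre ++ (a ++ y :: b) :: post,
      r = a ++ y :: b ∨ r ∈ pre ++ (a ++ x :: b) :: post := by
    simp only [List.mem_append, List.mem_cons]
    tauto
  have hR := List.mem_append_right pre (List.mem_cons_self (a := a ++ x :: b) (l := post))
  refine ⟨fun r hr z hz => ?_, fun r hr => ?_, ?_⟩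
  · rcases hrows r hr with rfl | hr
    · simp only [List.mem_append, List.mem_cons] at hz
      rcases hz with hz | rfl | hz
      · exact hpos _ hR z (by simp [hz])
      · exact hy
      · exact hpos _ hR z (by simp [hz])
    · exact hpos r hr z hz
  · rcases hrows r hr with rfl | hr
    · exact (hrow _ hR).append_cons_of_le hyx hleft
    · exact hrow r hr
  · rw [List.isChain_split] at hcol ⊢
    obtain ⟨habove, hbelow'⟩ := hcol
    constructor
    · rw [List.isChain_append] at habove ⊢
      refine ⟨habove.1, List.isChain_singleton _, fun U hU R hR => ?_⟩
      obtain rfl : R = a ++ y :: b := by simpa using hR.symm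
      exact (habove.2.2 U hU _ rfl).replace_lower hyx
    · rw [List.isChain_cons] at hbelow' ⊢
      exact ⟨fun S hS => (hbelow'.1 S hS).replace_upper (hbelow S hS), hbelow'.2⟩

theorem exists_eq_append_cons_of_lt_length_flatten :
    ∀ {rows : List (List ℕ)} {p : ℕ}, p < rows.flatten.length →
      ∃ (pre : List (List ℕ)) (a : List ℕ) (x : ℕ) (b : List ℕ) (post : List (List ℕ)),
        rows = pre ++ (a ++ x :: b) :: post ∧ p = pre.flatten.length + a.length
  | [], _, hp => by simp at hp
  | r :: rs, p, hp => by
    by_cases hpr : p < r.length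
    · obtain ⟨a, b, hr, ha⟩ := List.exists_eq_append_cons_getD hpr 0
      exact ⟨[], a, _, b, rs, by rw [← hr]; rfl, by simp [ha]⟩
    · simp only [List.flatten_cons, List.length_append] at hp
      obtain ⟨pre, a, x, b, post, rfl, hp'⟩ :=
        exists_eq_append_cons_of_lt_length_flatten (rows := rs) (p := p - r.length) (by omega)
      refine ⟨r :: pre, a, x, b, post, rfl, ?_⟩
      simp only [List.flatten_cons, List.length_append]
      omega

theorem setEntry_append_cons (pre post : List (List ℕ)) (a b : List ℕ) (x y : ℕ) :
    setEntry (pre ++ (a ++ x :: b) :: post) (pre.flatten.length + a.length) y =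
      pre ++ (a ++ y :: b) :: post := by
  induction pre with
  | nil => simp [setEntry]
  | cons r pre ih =>
    rw [List.cons_append, List.flatten_cons, List.length_append, Nat.add_assoc, setEntry,
      if_neg (by omega), Nat.add_sub_cancel_left, ih, List.cons_append]

theorem map_length_setEntry (v : ℕ) :
    ∀ (rows : List (List ℕ)) (p : ℕ), (setEntry rows p v).map List.length = rows.map List.length
  | [], _ => rfl
  | r :: rs, p => by
    rw [setEntry]
    split
    · simp
    · simp [map_length_setEntry v rs]

theorem ColumnStrict.take_count_eq_replicate {i : ℕ} :
    ∀ {u v : List ℕ}, ColumnStrict u v → u.Pairwise (· ≤ ·) → (∀ x ∈ u, i ≤ x) →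
      (∀ y ∈ v, i - 1 ≤ y) → v.take (u.count i) = List.replicate (u.count i) (i - 1)
  | [], _, _, _, _, _ => by simp
  | x :: u, [], h, _, _, _ => absurd h.1 (by simp)
  | x :: u, y :: v, h, hu, hiu, hv => by
    have hyx : y < x := by simpa using h.2 0 (by simp)
    rw [List.pairwise_cons] at hu
    rcases (hiu x List.mem_cons_self).eq_or_lt with hxi | hix
    · subst hxi
      have ih := take_count_eq_replicate (h.of_append (a := [i]) (sa := [y]) rfl) hu.2
        (fun z hz => hiu z (List.mem_cons_of_mem _ hz))
        (fun z hz => hv z (List.mem_cons_of_mem _ hz))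
      have hy : y = i - 1 := by have := hv y List.mem_cons_self; omega
      rw [List.count_cons_self, List.take_succ_cons, ih, hy, List.replicate_succ]
    · have : (x :: u).count i = 0 := List.count_eq_zero.mpr fun hi => by
        rcases List.mem_cons.mp hi with rfl | hi
        · exact hix.false
        · exact (hix.trans_le (hu.1 i hi)).false
      simp [this]

section ChangedEntry

variable {i : ℕ} {u a b S v : List ℕ}

theorem le_pred_of_mem_of_rightPos_eq (hi : 1 ≤ i)
    (hpos : 0 < miMax i (u ++ (a ++ i :: b) ++ v))
    (hp : rightPos i (u ++ (a ++ i :: b) ++ v) = u.length + a.length)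
    (hR : (a ++ i :: b).Pairwise (· ≤ ·)) : ∀ z ∈ a, z ≤ i - 1 := by
  rcases a.eq_nil_or_concat with rfl | ⟨a, y, rfl⟩
  · simp
  have hword : u ++ (a.concat y ++ i :: b) ++ v = (u ++ a) ++ y :: (i :: b ++ v) := by simp
  rw [hword] at hpos hp
  have hyi := ne_of_rightPos_eq_length_add_one hi hpos (by simpa [Nat.add_assoc] using hp)
  simp only [List.concat_eq_append, List.append_assoc, List.singleton_append,
    List.pairwise_append, List.pairwise_cons, List.mem_cons] at hR
  have hyle : y ≤ i := hR.2.1.1 i (Or.inl rfl)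
  intro z hz
  rw [List.concat_eq_append, List.mem_append, List.mem_singleton] at hz
  rcases hz with hz | rfl
  · exact (hR.2.2 z hz y (Or.inl rfl)).trans (by omega)
  · omega

theorem lt_pred_of_rightPos_eq (hpos : 0 < miMax i (u ++ (a ++ i :: b) ++ S ++ v))
    (hp : rightPos i (u ++ (a ++ i :: b) ++ S ++ v) = u.length + a.length)
    (hR : (a ++ i :: b).Pairwise (· ≤ ·)) (hS : S.Pairwise (· ≤ ·))
    (hcol : ColumnStrict (a ++ i :: b) S) : S.getD a.length 0 < i - 1 := by
  have hlt : S.getD a.length 0 < i := by simpa using hcol.2 a.length (by simp)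
  by_contra! hge
  have hlen : a.length < S.length := by
    have := hcol.1
    simp only [List.length_append, List.length_cons] at this
    omega
  obtain ⟨sa, sb, hS_eq, hsa⟩ := List.exists_eq_append_cons_getD hlen 0
  rw [show S.getD a.length 0 = i - 1 by omega] at hS_eq
  subst hS_eq
  simp only [List.pairwise_append, List.pairwise_cons] at hR hS
  set m := (i :: b).count i
  have hrun : ((i - 1) :: sb).take m = List.replicate m (i - 1) :=
    (hcol.of_append hsa.symm).take_count_eq_replicate
      (List.pairwise_cons.mpr ⟨hR.2.1.1, hR.2.1.2⟩) (by simpa using hR.2.1.1)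
      (List.forall_mem_cons.mpr ⟨le_rfl, hS.2.1.1⟩)
  have hword : u ++ (a ++ i :: b) ++ (sa ++ (i - 1) :: sb) ++ v =
      (u ++ a) ++ ((i :: b) ++ sa ++ List.replicate m (i - 1)) ++
        (((i - 1) :: sb).drop m ++ v) := by
    rw [← hrun]
    simp only [List.append_assoc, List.cons_append]
    rw [← List.append_assoc (List.take _ _), List.take_append_drop, List.cons_append]
  rw [hword] at hpos hp
  have hcount := count_pred_lt_count_of_rightPos_eq hpos (by simpa using hp) (by simp)
  have hsa_i : sa.count i = 0 := List.count_eq_zero.mpr fun hi => by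
    have := hS.2.2 i hi (i - 1) List.mem_cons_self
    omega
  simp only [List.count_append, List.count_replicate, hsa_i, beq_iff_eq] at hcount
  split_ifs at hcount <;> omega

end ChangedEntry

/-- ẽ_i applied to a semistandard tableau with m_i(w_T) > 0 is again a
semistandard tableau of the same shape. -/
theorem stmt2 (i : ℕ) (hi : 2 ≤ i) (rows : List (List ℕ)) (hT : IsSSYT rows)
    (hpos : 0 < miMax i (readingWord rows)) :
    IsSSYT (setEntry rows (rightPos i (readingWord rows)) (i - 1)) ∧
    (setEntry rows (rightPos i (readingWord rows)) (i - 1)).map List.length =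
      rows.map List.length := by
  refine ⟨?_, map_length_setEntry _ _ _⟩
  obtain ⟨pre, a, x, b, post, rfl, hp⟩ :=
    exists_eq_append_cons_of_lt_length_flatten (rightPos_spec hpos).1
  have hword : readingWord (pre ++ (a ++ x :: b) :: post) =
      pre.flatten ++ (a ++ x :: b) ++ post.flatten := by
    simp [readingWord]
  rw [hword] at hpos hp
  obtain rfl : i = x :=
    (eq_of_rightPos_eq_length (u := pre.flatten ++ a) (v := b ++ post.flatten)
      (by simpa using hpos) (by simpa using hp)).symm
  rw [hword, hp, setEntry_append_cons]
  obtain ⟨-, hrow, hcol⟩ := (isSSYT_iff _).mp hT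
  have hR : (a ++ i :: b).Pairwise (· ≤ ·) := hrow _ (by simp)
  refine hT.replace (by omega) (Nat.sub_le i 1)
    (le_pred_of_mem_of_rightPos_eq (by omega) hpos hp hR) fun S hS => ?_
  obtain ⟨post, rfl⟩ := List.head?_eq_some_iff.mp hS
  rw [List.isChain_split, List.isChain_cons_cons] at hcol
  exact lt_pred_of_rightPos_eq (by simpa using hpos) (by simpa using hp) hR (hrow S (by simp))
    hcol.2.1
end

section
/- Let u and v be permutations of {1,...,n} whose one-line words differ by an elementary dual equivalence on the three consecutive values i−1, i, i+1 (swapping the positions of the two outer values when the middle value i is not positioned between them). Then the descent sets of u and v satisfy: i−1 ∈ Des(u) if and only if i−1 ∉ Des(v), and i ∈ Des(u) if and only if i ∉ Des(v). -/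
/-- Swap the values x and y in a word. -/
def swapVals (x y : ℕ) (w : List ℕ) : List ℕ :=
  w.map (fun z => if z = x then y else if z = y then x else z)

/-- Haiman's elementary dual equivalence on the values i-1, i, i+1:
applicable when i is not the middle one of the three (by position), it
exchanges i with the other outer value. -/
def EDE (i : ℕ) (u v : List ℕ) : Prop :=
  2 ≤ i ∧
  ((u.idxOf i < u.idxOf (i + 1) ∧ u.idxOf (i + 1) < u.idxOf (i - 1) ∧
      v = swapVals i (i - 1) u) ∨
   (u.idxOf i < u.idxOf (i - 1) ∧ u.idxOf (i - 1) < u.idxOf (i + 1) ∧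
      v = swapVals i (i + 1) u) ∨
   (u.idxOf (i - 1) < u.idxOf (i + 1) ∧ u.idxOf (i + 1) < u.idxOf i ∧
      v = swapVals i (i - 1) u) ∨
   (u.idxOf (i + 1) < u.idxOf (i - 1) ∧ u.idxOf (i - 1) < u.idxOf i ∧
      v = swapVals i (i + 1) u))

/-- j is a descent of w if j+1 appears to the left of j. -/
def Des (w : List ℕ) : Set ℕ := {j | w.idxOf (j + 1) < w.idxOf j}

theorem List.idxOf_map_equiv {α β : Type*} [DecidableEq α] [DecidableEq β] (e : α ≃ β)
    (l : List α) (b : β) : (l.map e).idxOf b = l.idxOf (e.symm b) := by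
  rw [List.idxOf, List.idxOf, List.findIdx_map]
  congr 1
  funext a
  simp only [Function.comp_apply, beq_eq_beq, ← Equiv.eq_symm_apply]

theorem swapVals_eq_map_swap (x y : ℕ) (w : List ℕ) : swapVals x y w = w.map (Equiv.swap x y) :=
  rfl

theorem idxOf_swapVals (x y : ℕ) (w : List ℕ) (z : ℕ) :
    (swapVals x y w).idxOf z = w.idxOf (Equiv.swap x y z) := by
  rw [swapVals_eq_map_swap, List.idxOf_map_equiv, Equiv.symm_swap]

theorem stmt4_general (i : ℕ) (u v : List ℕ) (h : EDE i u v) :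
    ((i - 1) ∈ Des u ↔ (i - 1) ∉ Des v) ∧ (i ∈ Des u ↔ i ∉ Des v) := by
  obtain ⟨hi, hc⟩ := h
  have hpred : i - 1 + 1 = i := by omega
  -- In each case both descents of `v` become comparisons between the positions of the
  -- three values in `u`, whose relative order the case prescribes.
  rcases hc with ⟨h₁, h₂, rfl⟩ | ⟨h₁, h₂, rfl⟩ | ⟨h₁, h₂, rfl⟩ | ⟨h₁, h₂, rfl⟩ <;>
    simp only [Des, Set.mem_ofPred_eq, idxOf_swapVals, hpred, Equiv.swap_apply_def] <;>
    split_ifs <;> omega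

/-- An elementary dual equivalence for i-1, i, i+1 toggles the descents at
positions i-1 and i. -/
theorem stmt4 (n i : ℕ) (u v : List ℕ) (hu : u.Perm (List.range' 1 n))
    (hin : i + 1 ≤ n) (h : EDE i u v) :
    ((i - 1) ∈ Des u ↔ (i - 1) ∉ Des v) ∧ (i ∈ Des u ↔ i ∉ Des v) :=
  stmt4_general i u v h
end

section
/- Let T be a standard Young tableau of shape λ ⊢ n whose reading word w_T has i to the left of both i−1 and i+1, with ε(T,i) = 1 and ε(T,i−1) = 0, where ε(T,j) = 1 iff j appears to the left of j+1 in w_T. Then the composite crystal operation f̃_{i−1} f̃_i ẽ_{i−1} ẽ_i applied to T is defined (never 0 at any intermediate step) and equals the standard tableau obtained from T by the elementary dual equivalence on the values i−1, i, i+1. -/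
/-- A standard Young tableau with entries exactly 1, ..., n. -/
def IsSYT (n : ℕ) (rows : List (List ℕ)) : Prop :=
  IsSSYT rows ∧ (readingWord rows).Perm (List.range' 1 n)

/-- Suffix statistic for the raising operator ẽ_i acting on the letters
i, i+1 (number of (i+1)'s minus number of i's in the suffix from r). -/
def m2 (i : ℕ) (w : List ℕ) (r : ℕ) : ℤ :=
  ((w.drop r).count (i + 1) : ℤ) - ((w.drop r).count i : ℤ)

noncomputable def m2Max (i : ℕ) (w : List ℕ) : ℤ :=
  sSup {m : ℤ | ∃ r < w.length, m2 i w r = m}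

noncomputable def rPos2 (i : ℕ) (w : List ℕ) : ℕ :=
  sSup {r : ℕ | r < w.length ∧ m2 i w r = m2Max i w}

/-- ẽ_i: change the rightmost i+1 achieving the maximum to i. -/
noncomputable def eOp2 (i : ℕ) (w : List ℕ) : Option (List ℕ) :=
  if 0 < m2Max i w then some (w.set (rPos2 i w) i) else none

/-- Prefix statistic for the lowering operator f̃_i (number of i's minus
number of (i+1)'s in the prefix of length r). -/
def mf2 (i : ℕ) (w : List ℕ) (r : ℕ) : ℤ :=
  ((w.take r).count i : ℤ) - ((w.take r).count (i + 1) : ℤ)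

noncomputable def mf2Max (i : ℕ) (w : List ℕ) : ℤ :=
  sSup {m : ℤ | ∃ r, 1 ≤ r ∧ r ≤ w.length ∧ mf2 i w r = m}

noncomputable def lPos2 (i : ℕ) (w : List ℕ) : ℕ :=
  sInf {q : ℕ | q < w.length ∧ mf2 i w (q + 1) = mf2Max i w}

/-- f̃_i: change the leftmost i achieving the maximum to i+1. -/
noncomputable def fOp2 (i : ℕ) (w : List ℕ) : Option (List ℕ) :=
  if 0 < mf2Max i w then some (w.set (lPos2 i w) (i + 1)) else none


section CrystalHelpers

private lemma lt_len_of_getD {w : List ℕ} {j x : ℕ} (hx : x ≠ 0) (h : w.getD j 0 = x) :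
    j < w.length := by
  by_contra hc
  rw [List.getD_eq_default _ _ (by omega)] at h
  exact hx h.symm

private lemma getD_set' (w : List ℕ) (k j y : ℕ) (hk : k < w.length) :
    (w.set k y).getD j 0 = if j = k then y else w.getD j 0 := by
  by_cases hj : j < w.length
  · rw [List.getD_eq_getElem _ 0 (by simpa using hj), List.getElem_set]
    by_cases h : k = j
    · simp [h]
    · rw [if_neg h, if_neg (fun hh => h hh.symm), List.getD_eq_getElem _ 0 hj]
  · rw [List.getD_eq_default _ _ (by simpa using not_lt.mp hj),
      if_neg (by omega), List.getD_eq_default _ _ (by omega)]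

private lemma count_take_succ' (w : List ℕ) (x r : ℕ) (hx : x ≠ 0) :
    (w.take (r+1)).count x = (w.take r).count x + if w.getD r 0 = x then 1 else 0 := by
  rcases lt_or_ge r w.length with h | h
  · rw [show w.take (r+1) = w.take r ++ [w[r]] by
        rw [← List.take_concat_get h, List.concat_eq_append],
      List.count_append, List.getD_eq_getElem w 0 h]
    congr 1
    simp [List.count_singleton']
  · rw [List.take_of_length_le h, List.take_of_length_le (by omega),
      List.getD_eq_default _ _ h, if_neg (fun hh => hx hh.symm)]
    omega

private lemma ct0 (w : List ℕ) (x : ℕ) (hx : x ≠ 0)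
    (H : ∀ j, w.getD j 0 ≠ x) (r : ℕ) : (w.take r).count x = 0 := by
  induction r with
  | zero => simp
  | succ r ih => rw [count_take_succ' w x r hx, ih, if_neg (H r)]

private lemma ct1 (w : List ℕ) (x p : ℕ) (hx : x ≠ 0)
    (H : ∀ j, w.getD j 0 = x ↔ j = p) (r : ℕ) :
    (w.take r).count x = if p < r then 1 else 0 := by
  induction r with
  | zero => simp
  | succ r ih =>
    rw [count_take_succ' w x r hx, ih]
    by_cases hrp : r = p
    · subst hrp; rw [if_pos ((H r).mpr rfl)]; split_ifs <;> omega
    · rw [if_neg (fun hh => hrp ((H r).mp hh))]; split_ifs <;> omega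

private lemma ct2 (w : List ℕ) (x p q : ℕ) (hx : x ≠ 0) (hpq : p ≠ q)
    (H : ∀ j, w.getD j 0 = x ↔ j = p ∨ j = q) (r : ℕ) :
    (w.take r).count x = (if p < r then 1 else 0) + (if q < r then 1 else 0) := by
  induction r with
  | zero => simp
  | succ r ih =>
    rw [count_take_succ' w x r hx, ih]
    by_cases hr : r = p ∨ r = q
    · rw [if_pos ((H r).mpr hr)]
      rcases hr with rfl | rfl <;> split_ifs <;> omega
    · rw [if_neg (fun hh => hr ((H r).mp hh))]
      push_neg at hr
      split_ifs <;> omega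

private lemma take_drop_count (w : List ℕ) (x r : ℕ) :
    (w.take r).count x + (w.drop r).count x = w.count x := by
  rw [← List.count_append, List.take_append_drop]

private lemma cnt0 (w : List ℕ) (x : ℕ) (hx : x ≠ 0)
    (H : ∀ j, w.getD j 0 ≠ x) (r : ℕ) : (w.drop r).count x = 0 := by
  have h1 := take_drop_count w x r
  have h3 := ct0 w x hx H w.length
  rw [List.take_length] at h3
  have h2 := ct0 w x hx H r
  omega

private lemma cnt1 (w : List ℕ) (x p : ℕ) (hx : x ≠ 0)
    (H : ∀ j, w.getD j 0 = x ↔ j = p) (r : ℕ) :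
    (w.drop r).count x = if r ≤ p then 1 else 0 := by
  have hp : p < w.length := lt_len_of_getD hx ((H p).mpr rfl)
  have h1 := take_drop_count w x r
  have h3 := ct1 w x p hx H w.length
  rw [List.take_length] at h3
  have h2 := ct1 w x p hx H r
  rw [h2, h3] at h1
  split_ifs at h1 ⊢ <;> omega

private lemma cnt2 (w : List ℕ) (x p q : ℕ) (hx : x ≠ 0) (hpq : p ≠ q)
    (H : ∀ j, w.getD j 0 = x ↔ j = p ∨ j = q) (r : ℕ) :
    (w.drop r).count x = (if r ≤ p then 1 else 0) + (if r ≤ q then 1 else 0) := by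
  have hp : p < w.length := lt_len_of_getD hx ((H p).mpr (Or.inl rfl))
  have hq : q < w.length := lt_len_of_getD hx ((H q).mpr (Or.inr rfl))
  have h1 := take_drop_count w x r
  have h3 := ct2 w x p q hx hpq H w.length
  rw [List.take_length] at h3
  have h2 := ct2 w x p q hx hpq H r
  rw [h2, h3] at h1
  split_ifs at h1 ⊢ <;> omega

private lemma eOp2_eq_some (x : ℕ) (w : List ℕ) (r0 : ℕ) (M : ℤ) (hM : 0 < M)
    (h1 : r0 < w.length) (h2 : m2 x w r0 = M)
    (hub : ∀ r, r < w.length → m2 x w r ≤ M)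
    (hgt : ∀ r, r0 < r → r < w.length → m2 x w r < M) :
    eOp2 x w = some (w.set r0 x) := by
  have hmax : m2Max x w = M := by
    apply IsGreatest.csSup_eq
    exact ⟨⟨r0, h1, h2⟩, by rintro m ⟨r, hr, rfl⟩; exact hub r hr⟩
  have hpos : rPos2 x w = r0 := by
    apply IsGreatest.csSup_eq
    refine ⟨⟨h1, by rw [hmax]; exact h2⟩, ?_⟩
    rintro r ⟨hr1, hr2⟩
    by_contra hc
    rw [hmax] at hr2
    exact absurd hr2 (ne_of_lt (hgt r (by omega) hr1))
  unfold eOp2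
  rw [hmax, if_pos hM, hpos]

private lemma fOp2_eq_some (x : ℕ) (w : List ℕ) (q0 : ℕ) (M : ℤ) (hM : 0 < M)
    (h1 : q0 < w.length) (h2 : mf2 x w (q0+1) = M)
    (hub : ∀ r, 1 ≤ r → r ≤ w.length → mf2 x w r ≤ M)
    (hlt : ∀ q, q < q0 → mf2 x w (q+1) ≠ M) :
    fOp2 x w = some (w.set q0 (x+1)) := by
  have hmax : mf2Max x w = M := by
    apply IsGreatest.csSup_eq
    exact ⟨⟨q0+1, by omega, by omega, h2⟩, by rintro m ⟨r, hr1, hr2, rfl⟩; exact hub r hr1 hr2⟩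
  have hpos : lPos2 x w = q0 := by
    apply IsLeast.csInf_eq
    refine ⟨⟨h1, by rw [hmax]; exact h2⟩, ?_⟩
    rintro q ⟨hq1, hq2⟩
    by_contra hc
    rw [hmax] at hq2
    exact hlt q (by omega) hq2
  unfold fOp2
  rw [hmax, if_pos hM, hpos]

private lemma profile_of_nodup (w : List ℕ) (hnd : w.Nodup) (x : ℕ) (hx : x ≠ 0)
    (hm : x ∈ w) : ∀ j, (w.getD j 0 = x ↔ j = w.idxOf x) := by
  intro j
  have hp : w.idxOf x < w.length := List.idxOf_lt_length_iff.mpr hm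
  constructor
  · intro h
    have hj : j < w.length := lt_len_of_getD hx h
    have heq : w[j] = w[w.idxOf x] := by
      rw [List.getElem_idxOf hp, ← List.getD_eq_getElem w 0 hj]
      exact h
    exact (List.Nodup.getElem_inj_iff hnd).mp heq
  · rintro rfl
    rw [List.getD_eq_getElem w 0 hp, List.getElem_idxOf hp]

end CrystalHelpers

private lemma caseA (w : List ℕ) (i p a b : ℕ) (hi : 2 ≤ i)
    (Hm : ∀ j, w.getD j 0 = i - 1 ↔ j = a)
    (Hi : ∀ j, w.getD j 0 = i ↔ j = p)
    (Hp : ∀ j, w.getD j 0 = i + 1 ↔ j = b)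
    (hpb : p < b) (hba : b < a) :
    ((((eOp2 i w).bind (eOp2 (i - 1))).bind (fOp2 i)).bind (fOp2 (i - 1))) =
      some (swapVals i (i - 1) w) := by
  have hxm : i - 1 ≠ 0 := by omega
  have hxi : i ≠ 0 := by omega
  have hxp : i + 1 ≠ 0 := by omega
  have him1 : i - 1 + 1 = i := by omega
  have ha : a < w.length := lt_len_of_getD hxm ((Hm a).mpr rfl)
  have hb : b < w.length := by omega
  have hp : p < w.length := by omega
  -- step 1
  have hm2 : ∀ r, m2 i w r = (if r ≤ b then 1 else 0) - (if r ≤ p then 1 else 0) := by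
    intro r
    unfold m2
    rw [cnt1 w (i+1) b hxp Hp r, cnt1 w i p hxi Hi r]
    split_ifs <;> norm_num
  have e1 : eOp2 i w = some (w.set b i) := by
    apply eOp2_eq_some i w b 1 one_pos hb
    · rw [hm2]; split_ifs <;> omega
    · intro r _; rw [hm2]; split_ifs <;> omega
    · intro r hr _; rw [hm2]; split_ifs <;> omega
  have hlen1 : (w.set b i).length = w.length := by simp
  have Hm1 : ∀ j, (w.set b i).getD j 0 = i - 1 ↔ j = a := by
    intro j
    rw [getD_set' w b j i hb]
    split_ifs with h
    · subst h; constructor <;> intro <;> omega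
    · exact Hm j
  have Hi1 : ∀ j, (w.set b i).getD j 0 = i ↔ j = p ∨ j = b := by
    intro j
    rw [getD_set' w b j i hb]
    split_ifs with h
    · subst h; simp
    · rw [Hi j]; omega
  have Hp1 : ∀ j, (w.set b i).getD j 0 ≠ i + 1 := by
    intro j
    rw [getD_set' w b j i hb]
    split_ifs with h
    · omega
    · exact fun hh => h ((Hp j).mp hh)
  -- step 2
  have hm2' : ∀ r, m2 (i-1) (w.set b i) r =
      ((if r ≤ p then 1 else 0) + (if r ≤ b then 1 else 0)) - (if r ≤ a then 1 else 0) := by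
    intro r
    unfold m2
    rw [him1, cnt2 (w.set b i) i p b hxi (by omega) Hi1 r, cnt1 (w.set b i) (i-1) a hxm Hm1 r]
    split_ifs <;> norm_num
  have e2 : eOp2 (i-1) (w.set b i) = some ((w.set b i).set p (i-1)) := by
    apply eOp2_eq_some (i-1) (w.set b i) p 1 one_pos (by omega)
    · rw [hm2']; split_ifs <;> omega
    · intro r _; rw [hm2']; split_ifs <;> omega
    · intro r hr _; rw [hm2']; split_ifs <;> omega
  have hlen2 : ((w.set b i).set p (i-1)).length = w.length := by simp
  have hpl1 : p < (w.set b i).length := by omega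
  have Hm2 : ∀ j, ((w.set b i).set p (i-1)).getD j 0 = i - 1 ↔ j = p ∨ j = a := by
    intro j
    rw [getD_set' (w.set b i) p j (i-1) hpl1]
    split_ifs with h
    · subst h; simp
    · rw [Hm1 j]; omega
  have Hi2 : ∀ j, ((w.set b i).set p (i-1)).getD j 0 = i ↔ j = b := by
    intro j
    rw [getD_set' (w.set b i) p j (i-1) hpl1]
    split_ifs with h
    · subst h; constructor <;> intro <;> omega
    · rw [Hi1 j]; omega
  have Hp2 : ∀ j, ((w.set b i).set p (i-1)).getD j 0 ≠ i + 1 := by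
    intro j
    rw [getD_set' (w.set b i) p j (i-1) hpl1]
    split_ifs with h
    · omega
    · exact Hp1 j
  -- step 3
  have hmf : ∀ r, mf2 i ((w.set b i).set p (i-1)) r = if b < r then 1 else 0 := by
    intro r
    unfold mf2
    rw [ct1 _ i b hxi Hi2 r, ct0 _ (i+1) hxp Hp2 r]
    split_ifs <;> norm_num
  have f3 : fOp2 i ((w.set b i).set p (i-1)) =
      some (((w.set b i).set p (i-1)).set b (i+1)) := by
    apply fOp2_eq_some i _ b 1 one_pos (by omega)
    · rw [hmf]; split_ifs <;> omega
    · intro r _ _; rw [hmf]; split_ifs <;> omega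
    · intro q hq; rw [hmf]; split_ifs <;> omega
  have hlen3 : (((w.set b i).set p (i-1)).set b (i+1)).length = w.length := by simp
  have hbl2 : b < ((w.set b i).set p (i-1)).length := by omega
  have Hm3 : ∀ j, (((w.set b i).set p (i-1)).set b (i+1)).getD j 0 = i - 1 ↔
      j = p ∨ j = a := by
    intro j
    rw [getD_set' _ b j (i+1) hbl2]
    split_ifs with h
    · subst h; constructor <;> intro <;> omega
    · exact Hm2 j
  have Hi3 : ∀ j, (((w.set b i).set p (i-1)).set b (i+1)).getD j 0 ≠ i := by
    intro j
    rw [getD_set' _ b j (i+1) hbl2]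
    split_ifs with h
    · omega
    · exact fun hh => h ((Hi2 j).mp hh)
  -- step 4
  have hmf' : ∀ r, mf2 (i-1) (((w.set b i).set p (i-1)).set b (i+1)) r =
      (if p < r then 1 else 0) + (if a < r then 1 else 0) := by
    intro r
    unfold mf2
    rw [him1, ct2 _ (i-1) p a hxm (by omega) Hm3 r, ct0 _ i hxi Hi3 r]
    split_ifs <;> norm_num
  have f4 : fOp2 (i-1) (((w.set b i).set p (i-1)).set b (i+1)) =
      some ((((w.set b i).set p (i-1)).set b (i+1)).set a (i-1+1)) := by
    apply fOp2_eq_some (i-1) _ a 2 (by norm_num) (by omega)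
    · rw [hmf']; split_ifs <;> omega
    · intro r _ _; rw [hmf']; split_ifs <;> omega
    · intro q hq; rw [hmf']; split_ifs <;> omega
  rw [him1] at f4
  rw [e1, Option.bind_some, e2, Option.bind_some, f3, Option.bind_some, f4]
  congr 1
  have hal3 : a < (((w.set b i).set p (i-1)).set b (i+1)).length := by omega
  apply List.ext_getElem
  · simp [swapVals]
  · intro j h1j h2j
    have hjw : j < w.length := by simpa using h1j
    simp only [swapVals, List.getElem_map]
    have hXj : ((((w.set b i).set p (i-1)).set b (i+1)).set a i).getD j 0 =
        if j = a then i else if j = b then i + 1 else if j = p then i - 1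
          else w.getD j 0 := by
      rw [getD_set' _ a j i hal3, getD_set' _ b j (i+1) hbl2,
        getD_set' _ p j (i-1) hpl1, getD_set' w b j i hb]
      split_ifs <;> rfl
    rw [List.getD_eq_getElem _ 0 h1j] at hXj
    rw [hXj, show w[j] = w.getD j 0 from (List.getD_eq_getElem w 0 hjw).symm]
    rcases eq_or_ne j a with rfl | hja
    · rw [if_pos rfl, (Hm j).mpr rfl, if_neg (by omega), if_pos rfl]
    · rw [if_neg hja]
      rcases eq_or_ne j b with rfl | hjb
      · rw [if_pos rfl, (Hp j).mpr rfl, if_neg (by omega), if_neg (by omega)]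
      · rw [if_neg hjb]
        rcases eq_or_ne j p with rfl | hjp
        · rw [if_pos rfl, (Hi j).mpr rfl, if_pos rfl]
        · rw [if_neg hjp, if_neg (fun hh => hjp ((Hi j).mp hh)),
            if_neg (fun hh => hja ((Hm j).mp hh))]

private lemma caseB (w : List ℕ) (i p a b : ℕ) (hi : 2 ≤ i)
    (Hm : ∀ j, w.getD j 0 = i - 1 ↔ j = a)
    (Hi : ∀ j, w.getD j 0 = i ↔ j = p)
    (Hp : ∀ j, w.getD j 0 = i + 1 ↔ j = b)
    (hpa : p < a) (hab : a < b) :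
    ((((eOp2 i w).bind (eOp2 (i - 1))).bind (fOp2 i)).bind (fOp2 (i - 1))) =
      some (swapVals i (i + 1) w) := by
  have hxm : i - 1 ≠ 0 := by omega
  have hxi : i ≠ 0 := by omega
  have hxp : i + 1 ≠ 0 := by omega
  have him1 : i - 1 + 1 = i := by omega
  have hb : b < w.length := lt_len_of_getD hxp ((Hp b).mpr rfl)
  have ha : a < w.length := by omega
  have hp : p < w.length := by omega
  -- step 1
  have hm2 : ∀ r, m2 i w r = (if r ≤ b then 1 else 0) - (if r ≤ p then 1 else 0) := by
    intro r
    unfold m2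
    rw [cnt1 w (i+1) b hxp Hp r, cnt1 w i p hxi Hi r]
    split_ifs <;> norm_num
  have e1 : eOp2 i w = some (w.set b i) := by
    apply eOp2_eq_some i w b 1 one_pos hb
    · rw [hm2]; split_ifs <;> omega
    · intro r _; rw [hm2]; split_ifs <;> omega
    · intro r hr _; rw [hm2]; split_ifs <;> omega
  have hlen1 : (w.set b i).length = w.length := by simp
  have Hm1 : ∀ j, (w.set b i).getD j 0 = i - 1 ↔ j = a := by
    intro j
    rw [getD_set' w b j i hb]
    split_ifs with h
    · subst h; constructor <;> intro <;> omega
    · exact Hm j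
  have Hi1 : ∀ j, (w.set b i).getD j 0 = i ↔ j = p ∨ j = b := by
    intro j
    rw [getD_set' w b j i hb]
    split_ifs with h
    · subst h; simp
    · rw [Hi j]; omega
  have Hp1 : ∀ j, (w.set b i).getD j 0 ≠ i + 1 := by
    intro j
    rw [getD_set' w b j i hb]
    split_ifs with h
    · omega
    · exact fun hh => h ((Hp j).mp hh)
  -- step 2
  have hm2' : ∀ r, m2 (i-1) (w.set b i) r =
      ((if r ≤ p then 1 else 0) + (if r ≤ b then 1 else 0)) - (if r ≤ a then 1 else 0) := by
    intro r
    unfold m2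
    rw [him1, cnt2 (w.set b i) i p b hxi (by omega) Hi1 r, cnt1 (w.set b i) (i-1) a hxm Hm1 r]
    split_ifs <;> norm_num
  have hbl1 : b < (w.set b i).length := by omega
  have e2 : eOp2 (i-1) (w.set b i) = some ((w.set b i).set b (i-1)) := by
    apply eOp2_eq_some (i-1) (w.set b i) b 1 one_pos (by omega)
    · rw [hm2']; split_ifs <;> omega
    · intro r _; rw [hm2']; split_ifs <;> omega
    · intro r hr _; rw [hm2']; split_ifs <;> omega
  have hlen2 : ((w.set b i).set b (i-1)).length = w.length := by simp
  have Hm2 : ∀ j, ((w.set b i).set b (i-1)).getD j 0 = i - 1 ↔ j = a ∨ j = b := by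
    intro j
    rw [getD_set' (w.set b i) b j (i-1) hbl1]
    split_ifs with h
    · subst h; simp
    · rw [Hm1 j]; omega
  have Hi2 : ∀ j, ((w.set b i).set b (i-1)).getD j 0 = i ↔ j = p := by
    intro j
    rw [getD_set' (w.set b i) b j (i-1) hbl1]
    split_ifs with h
    · subst h; constructor <;> intro <;> omega
    · rw [Hi1 j]; omega
  have Hp2 : ∀ j, ((w.set b i).set b (i-1)).getD j 0 ≠ i + 1 := by
    intro j
    rw [getD_set' (w.set b i) b j (i-1) hbl1]
    split_ifs with h
    · omega
    · exact Hp1 j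
  -- step 3
  have hmf : ∀ r, mf2 i ((w.set b i).set b (i-1)) r = if p < r then 1 else 0 := by
    intro r
    unfold mf2
    rw [ct1 _ i p hxi Hi2 r, ct0 _ (i+1) hxp Hp2 r]
    split_ifs <;> norm_num
  have f3 : fOp2 i ((w.set b i).set b (i-1)) =
      some (((w.set b i).set b (i-1)).set p (i+1)) := by
    apply fOp2_eq_some i _ p 1 one_pos (by omega)
    · rw [hmf]; split_ifs <;> omega
    · intro r _ _; rw [hmf]; split_ifs <;> omega
    · intro q hq; rw [hmf]; split_ifs <;> omega
  have hlen3 : (((w.set b i).set b (i-1)).set p (i+1)).length = w.length := by simp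
  have hpl2 : p < ((w.set b i).set b (i-1)).length := by omega
  have Hm3 : ∀ j, (((w.set b i).set b (i-1)).set p (i+1)).getD j 0 = i - 1 ↔
      j = a ∨ j = b := by
    intro j
    rw [getD_set' _ p j (i+1) hpl2]
    split_ifs with h
    · subst h; constructor <;> intro <;> omega
    · exact Hm2 j
  have Hi3 : ∀ j, (((w.set b i).set b (i-1)).set p (i+1)).getD j 0 ≠ i := by
    intro j
    rw [getD_set' _ p j (i+1) hpl2]
    split_ifs with h
    · omega
    · exact fun hh => h ((Hi2 j).mp hh)
  -- step 4
  have hmf' : ∀ r, mf2 (i-1) (((w.set b i).set b (i-1)).set p (i+1)) r =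
      (if a < r then 1 else 0) + (if b < r then 1 else 0) := by
    intro r
    unfold mf2
    rw [him1, ct2 _ (i-1) a b hxm (by omega) Hm3 r, ct0 _ i hxi Hi3 r]
    split_ifs <;> norm_num
  have f4 : fOp2 (i-1) (((w.set b i).set b (i-1)).set p (i+1)) =
      some ((((w.set b i).set b (i-1)).set p (i+1)).set b (i-1+1)) := by
    apply fOp2_eq_some (i-1) _ b 2 (by norm_num) (by omega)
    · rw [hmf']; split_ifs <;> omega
    · intro r _ _; rw [hmf']; split_ifs <;> omega
    · intro q hq; rw [hmf']; split_ifs <;> omega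
  rw [him1] at f4
  rw [e1, Option.bind_some, e2, Option.bind_some, f3, Option.bind_some, f4]
  congr 1
  have hbl3 : b < (((w.set b i).set b (i-1)).set p (i+1)).length := by omega
  apply List.ext_getElem
  · simp [swapVals]
  · intro j h1j h2j
    have hjw : j < w.length := by simpa using h1j
    simp only [swapVals, List.getElem_map]
    have hXj : ((((w.set b i).set b (i-1)).set p (i+1)).set b i).getD j 0 =
        if j = b then i else if j = p then i + 1 else w.getD j 0 := by
      rw [getD_set' _ b j i hbl3, getD_set' _ p j (i+1) hpl2,
        getD_set' _ b j (i-1) hbl1, getD_set' w b j i hb]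
      split_ifs <;> rfl
    rw [List.getD_eq_getElem _ 0 h1j] at hXj
    rw [hXj, show w[j] = w.getD j 0 from (List.getD_eq_getElem w 0 hjw).symm]
    rcases eq_or_ne j b with rfl | hjb
    · rw [if_pos rfl, (Hp j).mpr rfl, if_neg (by omega), if_pos rfl]
    · rw [if_neg hjb]
      rcases eq_or_ne j p with rfl | hjp
      · rw [if_pos rfl, (Hi j).mpr rfl, if_pos rfl]
      · rw [if_neg hjp, if_neg (fun hh => hjp ((Hi j).mp hh)),
            if_neg (fun hh => hjb ((Hp j).mp hh))]

/-- For a standard tableau T whose reading word has i to the left of both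
i-1 and i+1 (so ε(T,i) = 1 and ε(T,i-1) = 0), the composite
f̃_{i-1} f̃_i ẽ_{i-1} ẽ_i is defined at every step and computes the
elementary dual equivalence on the values i-1, i, i+1. -/
theorem stmt11 (n i : ℕ) (hi : 2 ≤ i) (hin : i + 1 ≤ n)
    (T : List (List ℕ)) (hT : IsSYT n T)
    (h1 : (readingWord T).idxOf i < (readingWord T).idxOf (i - 1))
    (h2 : (readingWord T).idxOf i < (readingWord T).idxOf (i + 1)) :
    ∃ v, ((((eOp2 i (readingWord T)).bind (eOp2 (i - 1))).bind
            (fOp2 i)).bind (fOp2 (i - 1))) = some v ∧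
      EDE i (readingWord T) v := by
  obtain ⟨-, hperm⟩ := hT
  have hnd : (readingWord T).Nodup := hperm.nodup_iff.mpr (List.nodup_range' _ (by norm_num))
  have hmem : ∀ x, 1 ≤ x → x ≤ n → x ∈ readingWord T := fun x hx1 hx2 =>
    hperm.mem_iff.mpr (by rw [List.mem_range'_1]; omega)
  have Hi := profile_of_nodup _ hnd i (by omega) (hmem i (by omega) (by omega))
  have Hm := profile_of_nodup _ hnd (i-1) (by omega) (hmem (i-1) (by omega) (by omega))
  have Hp := profile_of_nodup _ hnd (i+1) (by omega) (hmem (i+1) (by omega) (by omega))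
  have hab : (readingWord T).idxOf (i-1) ≠ (readingWord T).idxOf (i+1) := by
    intro h
    have ha1 := (Hm ((readingWord T).idxOf (i-1))).mpr rfl
    have hb1 := (Hp ((readingWord T).idxOf (i+1))).mpr rfl
    rw [h, hb1] at ha1
    omega
  rcases lt_or_gt_of_ne hab with hcase | hcase
  · exact ⟨swapVals i (i+1) (readingWord T),
      caseB (readingWord T) i _ _ _ hi Hm Hi Hp h1 hcase,
      hi, Or.inr (Or.inl ⟨h1, hcase, rfl⟩)⟩
  · exact ⟨swapVals i (i-1) (readingWord T),
      caseA (readingWord T) i _ _ _ hi Hm Hi Hp h2 hcase,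
      hi, Or.inl ⟨h2, hcase, rfl⟩⟩
end

section
/- The standard dual equivalence graph G_λ satisfies axiom (ax3): if T and U are joined by an i-edge, then σ(T)_{i−2} = −σ(U)_{i−2} implies σ(T)_{i−2} = −σ(T)_{i−1}, and σ(T)_{i+1} = −σ(U)_{i+1} implies σ(T)_{i+1} = −σ(T)_i. -/
/-- The signature: +1 if j appears to the left of j+1, -1 otherwise. -/
def sgn (w : List ℕ) (j : ℕ) : ℤ :=
  if w.idxOf j < w.idxOf (j + 1) then 1 else -1

/-!
An `i`-edge exchanges the value `i` with `i - 1` or with `i + 1` in the reading word and moves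
nothing else. Hence `σ_{i-2}` can only change when `i` is exchanged with `i - 1`: it then compares
`i - 2` with the old position of `i` instead of that of `i - 1`, so a change means that `i - 2`
lies between `i - 1` and `i`, and then `σ_{i-2} = -σ_{i-1}`. The case of `σ_{i+1}` is symmetric.
-/

theorem List.idxOf_map_of_injective {α β : Type*} [BEq α] [LawfulBEq α] [BEq β] [LawfulBEq β]
    {f : α → β} (hf : Function.Injective f) (w : List α) (a : α) :
    (w.map f).idxOf (f a) = w.idxOf a := by
  simp only [List.idxOf, List.findIdx_map, Function.comp_def, hf.beq_eq]

theorem idxOf_swapVals_left (x y : ℕ) (w : List ℕ) :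
    (swapVals x y w).idxOf y = w.idxOf x := by
  simpa [swapVals_eq_map_swap] using
    List.idxOf_map_of_injective (Equiv.swap x y).injective w x

theorem idxOf_swapVals_of_ne {x y z : ℕ} (hx : z ≠ x) (hy : z ≠ y) (w : List ℕ) :
    (swapVals x y w).idxOf z = w.idxOf z := by
  simpa [swapVals_eq_map_swap, Equiv.swap_apply_of_ne_of_ne hx hy] using
    List.idxOf_map_of_injective (Equiv.swap x y).injective w z

theorem EDE.eq_swapVals {i : ℕ} {u v : List ℕ} (h : EDE i u v) :
    v = swapVals i (i - 1) u ∨ v = swapVals i (i + 1) u := by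
  rcases h.2 with ⟨-, -, hv⟩ | ⟨-, -, hv⟩ | ⟨-, -, hv⟩ | ⟨-, -, hv⟩ <;>
    simp only [hv, true_or, or_true]

theorem sgn_sub_two_eq_neg_of_swapVals {i : ℕ} (hi : 2 ≤ i) {u v : List ℕ}
    (hv : v = swapVals i (i - 1) u ∨ v = swapVals i (i + 1) u)
    (hflip : sgn u (i - 2) = -sgn v (i - 2)) : sgn u (i - 2) = -sgn u (i - 1) := by
  have h₁ : i - 2 + 1 = i - 1 := by omega
  have h₂ : i - 1 + 1 = i := by omega
  rcases hv with rfl | rfl <;> simp only [sgn, h₁, h₂] at hflip ⊢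
  · rw [idxOf_swapVals_of_ne (by omega) (by omega), idxOf_swapVals_left] at hflip
    split_ifs at hflip ⊢ <;> omega
  · rw [idxOf_swapVals_of_ne (by omega) (by omega), idxOf_swapVals_of_ne (by omega) (by omega)]
      at hflip
    split_ifs at hflip
    omega

theorem sgn_add_one_eq_neg_of_swapVals {i : ℕ} {u v : List ℕ}
    (hv : v = swapVals i (i - 1) u ∨ v = swapVals i (i + 1) u)
    (hflip : sgn u (i + 1) = -sgn v (i + 1)) : sgn u (i + 1) = -sgn u i := by
  rcases hv with rfl | rfl <;> simp only [sgn] at hflip ⊢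
  · rw [idxOf_swapVals_of_ne (by omega) (by omega), idxOf_swapVals_of_ne (by omega) (by omega)]
      at hflip
    split_ifs at hflip
    omega
  · rw [idxOf_swapVals_left, idxOf_swapVals_of_ne (by omega) (by omega)] at hflip
    split_ifs at hflip ⊢ <;> omega

theorem stmt16_general (i : ℕ) (T U : List (List ℕ))
    (h : EDE i (readingWord T) (readingWord U)) :
    (sgn (readingWord T) (i - 2) = - sgn (readingWord U) (i - 2) →
      sgn (readingWord T) (i - 2) = - sgn (readingWord T) (i - 1)) ∧
    (sgn (readingWord T) (i + 1) = - sgn (readingWord U) (i + 1) →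
      sgn (readingWord T) (i + 1) = - sgn (readingWord T) i) :=
  ⟨sgn_sub_two_eq_neg_of_swapVals h.1 h.eq_swapVals, sgn_add_one_eq_neg_of_swapVals h.eq_swapVals⟩

/-- Axiom (ax3) for the standard dual equivalence graph. -/
theorem stmt16 (n i : ℕ) (T U : List (List ℕ)) (hT : IsSYT n T) (hU : IsSYT n U)
    (hsh : U.map List.length = T.map List.length)
    (h : EDE i (readingWord T) (readingWord U)) :
    (sgn (readingWord T) (i - 2) = - sgn (readingWord U) (i - 2) →
      sgn (readingWord T) (i - 2) = - sgn (readingWord T) (i - 1)) ∧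
    (sgn (readingWord T) (i + 1) = - sgn (readingWord U) (i + 1) →
      sgn (readingWord T) (i + 1) = - sgn (readingWord T) i) :=
  stmt16_general i T U h
end
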